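/- arXiv:2302.00678 — 3 statements merged into one kernel-verified Lean document; each statement's English description precedes it below -/
import Mathlib

section
/- Let μ, ν be probability measures on (Ω, 𝒜), both absolutely continuous with respect to a probability measure ℙ, with densities of the form dμ/dℙ = e^{−Φ}/Z and dν/dℙ = e^{−Ψ}/W, where Z = ∫ e^{−Φ}dℙ > 0, W = ∫ e^{−Ψ}dℙ > 0. Suppose Φ, Ψ ≥ φ₀ for a constant φ₀ ∈ ℝ (so that e^{−Φ}, e^{−Ψ} ≤ e^{−φ₀}). Then 2 d_Hell(μ,ν)² ≤ (2/Z)∫ (e^{−Φ/2} − e^{−Ψ/2})² dℙ + 2(Z^{−1/2} − W^{−1/2})² W. -/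
open MeasureTheory Real

theorem stmt6 {Ω : Type*} [MeasurableSpace Ω] (ℙ : Measure Ω) [IsProbabilityMeasure ℙ]
    (Φ Ψ : Ω → ℝ) (hΦ : Measurable Φ) (hΨ : Measurable Ψ)
    (φ₀ : ℝ) (hΦlb : ∀ ω, φ₀ ≤ Φ ω) (hΨlb : ∀ ω, φ₀ ≤ Ψ ω)
    (Z W : ℝ) (hZ : Z = ∫ ω, Real.exp (-(Φ ω)) ∂ℙ) (hW : W = ∫ ω, Real.exp (-(Ψ ω)) ∂ℙ)
    (hZpos : 0 < Z) (hWpos : 0 < W) :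
    2 * ((1/2) * ∫ ω, (Real.sqrt (Real.exp (-(Φ ω)) / Z)
        - Real.sqrt (Real.exp (-(Ψ ω)) / W))^2 ∂ℙ)
      ≤ (2 / Z) * ∫ ω, (Real.exp (-(Φ ω) / 2) - Real.exp (-(Ψ ω) / 2))^2 ∂ℙ
        + 2 * (Z ^ (-(1:ℝ)/2) - W ^ (-(1:ℝ)/2))^2 * W := by
  have hsZ : 0 < Real.sqrt Z := Real.sqrt_pos.mpr hZpos
  have hsW : 0 < Real.sqrt W := Real.sqrt_pos.mpr hWpos
  have hZsq : Real.sqrt Z ^ 2 = Z := Real.sq_sqrt hZpos.le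
  have hWsq : Real.sqrt W ^ 2 = W := Real.sq_sqrt hWpos.le
  have hZr : Z ^ (-(1:ℝ)/2) = (Real.sqrt Z)⁻¹ := by
    rw [neg_div, Real.rpow_neg hZpos.le, ← Real.sqrt_eq_rpow]
  have hWr : W ^ (-(1:ℝ)/2) = (Real.sqrt W)⁻¹ := by
    rw [neg_div, Real.rpow_neg hWpos.le, ← Real.sqrt_eq_rpow]
  -- integrability
  have hint1 : Integrable (fun ω => (Real.exp (-(Φ ω) / 2) - Real.exp (-(Ψ ω) / 2))^2) ℙ := by
    refine (integrable_const ((Real.exp (-φ₀ / 2))^2)).mono' ?_ (ae_of_all _ fun ω => ?_)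
    · exact (((hΦ.neg.div_const 2).exp.sub (hΨ.neg.div_const 2).exp).pow_const 2).aestronglyMeasurable
    · have h1 : Real.exp (-(Φ ω) / 2) ≤ Real.exp (-φ₀ / 2) := by
        apply Real.exp_le_exp.mpr; linarith [hΦlb ω]
      have h2 : Real.exp (-(Ψ ω) / 2) ≤ Real.exp (-φ₀ / 2) := by
        apply Real.exp_le_exp.mpr; linarith [hΨlb ω]
      have p1 := Real.exp_pos (-(Φ ω) / 2)
      have p2 := Real.exp_pos (-(Ψ ω) / 2)
      rw [Real.norm_eq_abs, abs_le]
      constructor <;> nlinarith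
  have hint2 : Integrable (fun ω => Real.exp (-(Ψ ω))) ℙ := by
    refine (integrable_const (Real.exp (-φ₀))).mono' hΨ.neg.exp.aestronglyMeasurable
      (ae_of_all _ fun ω => ?_)
    rw [Real.norm_eq_abs, abs_of_pos (Real.exp_pos _)]
    exact Real.exp_le_exp.mpr (by linarith [hΨlb ω])
  -- pointwise bound
  have key : ∀ ω, (Real.sqrt (Real.exp (-(Φ ω)) / Z)
      - Real.sqrt (Real.exp (-(Ψ ω)) / W))^2
      ≤ (2 / Z) * (Real.exp (-(Φ ω) / 2) - Real.exp (-(Ψ ω) / 2))^2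
        + 2 * (Z ^ (-(1:ℝ)/2) - W ^ (-(1:ℝ)/2))^2 * Real.exp (-(Ψ ω)) := by
    intro ω
    have e1 : Real.sqrt (Real.exp (-(Φ ω)) / Z) = Real.exp (-(Φ ω) / 2) / Real.sqrt Z := by
      rw [Real.sqrt_div (Real.exp_pos _).le, Real.exp_half]
    have e2 : Real.sqrt (Real.exp (-(Ψ ω)) / W) = Real.exp (-(Ψ ω) / 2) / Real.sqrt W := by
      rw [Real.sqrt_div (Real.exp_pos _).le, Real.exp_half]
    set a := Real.exp (-(Φ ω) / 2)
    set b := Real.exp (-(Ψ ω) / 2)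
    have hb2 : Real.exp (-(Ψ ω)) = b ^ 2 := by
      rw [← Real.exp_nat_mul]; norm_num [mul_div_cancel₀]
    rw [e1, e2, hZr, hWr, hb2]
    have step : (a / Real.sqrt Z - b / Real.sqrt W)^2
        ≤ 2 * (a / Real.sqrt Z - b / Real.sqrt Z)^2
          + 2 * (b / Real.sqrt Z - b / Real.sqrt W)^2 := by
      nlinarith [sq_nonneg (a / Real.sqrt Z + b / Real.sqrt W - 2 * (b / Real.sqrt Z))]
    have h1 : 2 * (a / Real.sqrt Z - b / Real.sqrt Z)^2 = 2 / Z * (a - b)^2 := by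
      rw [div_sub_div_same, div_pow, hZsq]; ring
    have h2 : 2 * (b / Real.sqrt Z - b / Real.sqrt W)^2
        = 2 * ((Real.sqrt Z)⁻¹ - (Real.sqrt W)⁻¹)^2 * b^2 := by
      simp only [div_eq_mul_inv]; rw [← mul_sub, mul_pow]; ring
    rw [h1, h2] at step
    exact step
  calc 2 * ((1/2) * ∫ ω, (Real.sqrt (Real.exp (-(Φ ω)) / Z)
        - Real.sqrt (Real.exp (-(Ψ ω)) / W))^2 ∂ℙ)
      = ∫ ω, (Real.sqrt (Real.exp (-(Φ ω)) / Z)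
        - Real.sqrt (Real.exp (-(Ψ ω)) / W))^2 ∂ℙ := by ring
    _ ≤ ∫ ω, ((2 / Z) * (Real.exp (-(Φ ω) / 2) - Real.exp (-(Ψ ω) / 2))^2
        + 2 * (Z ^ (-(1:ℝ)/2) - W ^ (-(1:ℝ)/2))^2 * Real.exp (-(Ψ ω))) ∂ℙ := by
        refine integral_mono_of_nonneg (ae_of_all _ fun ω => sq_nonneg _) ?_
          (ae_of_all _ key)
        exact (hint1.const_mul _).add (hint2.const_mul _)
    _ = (2 / Z) * ∫ ω, (Real.exp (-(Φ ω) / 2) - Real.exp (-(Ψ ω) / 2))^2 ∂ℙ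
        + 2 * (Z ^ (-(1:ℝ)/2) - W ^ (-(1:ℝ)/2))^2 * W := by
        rw [integral_add (hint1.const_mul _) (hint2.const_mul _),
          integral_const_mul, integral_const_mul, ← hW]
end

section
/- Let (Ω, 𝒜, ℙ) be a probability space, 𝒳 a Banach space, and μ, ν probability measures on Ω absolutely continuous with respect to ℙ with bounded densities dμ/dℙ, dν/dℙ ≤ K. Then for every φ ∈ L²(Ω, ℙ; 𝒳), ‖∫ φ dμ − ∫ φ dν‖_𝒳 ≤ 2 (2K)^{1/2} ‖φ‖_{L²(Ω,ℙ;𝒳)} d_Hell(μ, ν). -/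
/-!
Write `f`, `g` for the densities of `μ`, `ν` with respect to `ℙ`, so that
`∫ φ dμ - ∫ φ dν = ∫ (f - g) • φ dℙ`. Factoring `f - g = (√f - √g) (√f + √g)` and using
`√f + √g ≤ 2 √K` bounds the norm by `2 √K ∫ |√f - √g| ‖φ‖ dℙ`, and Cauchy–Schwarz in `L²(ℙ)`
turns this into `2 √K ‖√f - √g‖₂ ‖φ‖₂`, where `‖√f - √g‖₂ = √2 d_Hell(μ, ν)`.
-/

lemma abs_sub_le_two_sqrt_mul_abs_sqrt_sub {a b K : ℝ} (ha : 0 ≤ a) (hb : 0 ≤ b) (haK : a ≤ K)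
    (hbK : b ≤ K) : |a - b| ≤ 2 * √K * |√a - √b| := by
  have hsum : √a + √b ≤ 2 * √K := by
    linarith [Real.sqrt_le_sqrt haK, Real.sqrt_le_sqrt hbK]
  have hfactor : a - b = (√a - √b) * (√a + √b) := by
    linear_combination Real.sq_sqrt hb - Real.sq_sqrt ha
  calc |a - b| = |√a - √b| * (√a + √b) := by
        rw [hfactor, abs_mul, abs_of_nonneg (add_nonneg (Real.sqrt_nonneg a) (Real.sqrt_nonneg b))]
    _ ≤ |√a - √b| * (2 * √K) := by gcongr
    _ = 2 * √K * |√a - √b| := mul_comm _ _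

namespace MeasureTheory

variable {Ω : Type*} [MeasurableSpace Ω]

lemma MemLp.toReal_eLpNorm_two_eq_sqrt {E : Type*} [NormedAddCommGroup E] {μ : Measure Ω}
    {f : Ω → E} (hf : MemLp f 2 μ) : (eLpNorm f 2 μ).toReal = √(∫ ω, ‖f ω‖ ^ 2 ∂μ) := by
  rw [hf.eLpNorm_eq_integral_rpow_norm two_ne_zero ENNReal.ofNat_ne_top,
    ENNReal.toReal_ofReal (by positivity), Real.sqrt_eq_rpow]
  norm_num

lemma integral_norm_mul_norm_le_eLpNorm_two_mul {E F : Type*} [NormedAddCommGroup E]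
    [NormedAddCommGroup F] {μ : Measure Ω} {f : Ω → E} {g : Ω → F} (hf : MemLp f 2 μ)
    (hg : MemLp g 2 μ) :
    ∫ ω, ‖f ω‖ * ‖g ω‖ ∂μ ≤ (eLpNorm f 2 μ).toReal * (eLpNorm g 2 μ).toReal := by
  have h := integral_mul_le_Lp_mul_Lq_of_nonneg Real.HolderConjugate.two_two
    (ae_of_all _ fun ω ↦ norm_nonneg (f ω)) (ae_of_all _ fun ω ↦ norm_nonneg (g ω))
    (by simpa using hf.norm) (by simpa using hg.norm)
  rw [hf.toReal_eLpNorm_two_eq_sqrt, hg.toReal_eLpNorm_two_eq_sqrt, Real.sqrt_eq_rpow,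
    Real.sqrt_eq_rpow]
  simpa using h

variable {ℙ μ ν : Measure Ω}

lemma toReal_rnDeriv_le_of_rnDeriv_le {K : ℝ} (hK : 0 ≤ K)
    (hμK : ∀ᵐ ω ∂ℙ, μ.rnDeriv ℙ ω ≤ ENNReal.ofReal K) :
    ∀ᵐ ω ∂ℙ, (μ.rnDeriv ℙ ω).toReal ≤ K :=
  hμK.mono fun _ ↦ ENNReal.toReal_le_of_le_ofReal hK

lemma memLp_two_sqrt_toReal_rnDeriv [IsFiniteMeasure μ] :
    MemLp (fun ω ↦ √(μ.rnDeriv ℙ ω).toReal) 2 ℙ := by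
  refine (memLp_two_iff_integrable_sq ?_).mpr ?_
  · exact (Measure.measurable_rnDeriv μ ℙ).ennreal_toReal.sqrt.aestronglyMeasurable
  · simpa [Real.sq_sqrt ENNReal.toReal_nonneg] using Measure.integrable_toReal_rnDeriv

variable {E : Type*} [NormedAddCommGroup E] [NormedSpace ℝ E] {φ : Ω → E}

lemma Integrable.of_rnDeriv_le [μ.HaveLebesgueDecomposition ℙ] [SigmaFinite μ] (hμ : μ ≪ ℙ)
    {K : ℝ} (hK : 0 ≤ K) (hμK : ∀ᵐ ω ∂ℙ, μ.rnDeriv ℙ ω ≤ ENNReal.ofReal K)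
    (hφ : Integrable φ ℙ) : Integrable φ μ := by
  refine (integrable_rnDeriv_smul_iff hμ).mp (hφ.bdd_smul K ?_ ?_)
  · exact (Measure.measurable_rnDeriv μ ℙ).ennreal_toReal.aestronglyMeasurable
  · simpa using toReal_rnDeriv_le_of_rnDeriv_le hK hμK

lemma integral_sub_integral_eq_integral_rnDeriv_sub_smul [μ.HaveLebesgueDecomposition ℙ]
    [ν.HaveLebesgueDecomposition ℙ] [SigmaFinite μ] [SigmaFinite ν] (hμ : μ ≪ ℙ) (hν : ν ≪ ℙ)
    (hφμ : Integrable φ μ) (hφν : Integrable φ ν) :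
    ∫ ω, φ ω ∂μ - ∫ ω, φ ω ∂ν
      = ∫ ω, ((μ.rnDeriv ℙ ω).toReal - (ν.rnDeriv ℙ ω).toReal) • φ ω ∂ℙ := by
  simp_rw [sub_smul]
  rw [integral_sub ((integrable_rnDeriv_smul_iff hμ).mpr hφμ)
    ((integrable_rnDeriv_smul_iff hν).mpr hφν), integral_rnDeriv_smul hμ, integral_rnDeriv_smul hν]

lemma norm_integral_sub_integral_le_of_rnDeriv_le [IsFiniteMeasure ℙ] [IsFiniteMeasure μ]
    [IsFiniteMeasure ν] (hμ : μ ≪ ℙ) (hν : ν ≪ ℙ) {K : ℝ} (hK : 0 ≤ K)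
    (hμK : ∀ᵐ ω ∂ℙ, μ.rnDeriv ℙ ω ≤ ENNReal.ofReal K)
    (hνK : ∀ᵐ ω ∂ℙ, ν.rnDeriv ℙ ω ≤ ENNReal.ofReal K) (hφ : MemLp φ 2 ℙ) :
    ‖∫ ω, φ ω ∂μ - ∫ ω, φ ω ∂ν‖
      ≤ 2 * √K * √(∫ ω, (√(μ.rnDeriv ℙ ω).toReal - √(ν.rnDeriv ℙ ω).toReal) ^ 2 ∂ℙ)
        * (eLpNorm φ 2 ℙ).toReal := by
  set H : Ω → ℝ := fun ω ↦ √(μ.rnDeriv ℙ ω).toReal - √(ν.rnDeriv ℙ ω).toReal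
  have hH : MemLp H 2 ℙ := memLp_two_sqrt_toReal_rnDeriv.sub memLp_two_sqrt_toReal_rnDeriv
  have hφ₁ : Integrable φ ℙ := hφ.integrable one_le_two
  have hHφ : Integrable (fun ω ↦ ‖H ω‖ * ‖φ ω‖) ℙ := hH.norm.integrable_mul hφ.norm
  have hpointwise : ∀ᵐ ω ∂ℙ,
      ‖((μ.rnDeriv ℙ ω).toReal - (ν.rnDeriv ℙ ω).toReal) • φ ω‖ ≤ 2 * √K * (‖H ω‖ * ‖φ ω‖) := by
    filter_upwards [toReal_rnDeriv_le_of_rnDeriv_le hK hμK, toReal_rnDeriv_le_of_rnDeriv_le hK hνK]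
      with ω hμω hνω
    rw [norm_smul, Real.norm_eq_abs, Real.norm_eq_abs, ← mul_assoc]
    gcongr
    exact abs_sub_le_two_sqrt_mul_abs_sqrt_sub ENNReal.toReal_nonneg ENNReal.toReal_nonneg hμω hνω
  rw [integral_sub_integral_eq_integral_rnDeriv_sub_smul hμ hν (hφ₁.of_rnDeriv_le hμ hK hμK)
    (hφ₁.of_rnDeriv_le hν hK hνK)]
  calc _ ≤ ∫ ω, 2 * √K * (‖H ω‖ * ‖φ ω‖) ∂ℙ :=
        norm_integral_le_of_norm_le (hHφ.const_mul _) hpointwise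
    _ = 2 * √K * ∫ ω, ‖H ω‖ * ‖φ ω‖ ∂ℙ := integral_const_mul _ _
    _ ≤ 2 * √K * ((eLpNorm H 2 ℙ).toReal * (eLpNorm φ 2 ℙ).toReal) := by
        gcongr
        exact integral_norm_mul_norm_le_eLpNorm_two_mul hH hφ
    _ = _ := by
        rw [hH.toReal_eLpNorm_two_eq_sqrt]
        simp only [Real.norm_eq_abs, sq_abs, H]
        ring

end MeasureTheory

open MeasureTheory

theorem stmt9_general {Ω : Type*} [MeasurableSpace Ω] {𝒳 : Type*}
    [NormedAddCommGroup 𝒳] [NormedSpace ℝ 𝒳]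
    (ℙ μ ν : Measure Ω) [IsProbabilityMeasure ℙ] [IsProbabilityMeasure μ]
    [IsProbabilityMeasure ν]
    (hμ : μ ≪ ℙ) (hν : ν ≪ ℙ)
    (K : ℝ) (hK : 0 < K)
    (hμK : ∀ᵐ ω ∂ℙ, μ.rnDeriv ℙ ω ≤ ENNReal.ofReal K)
    (hνK : ∀ᵐ ω ∂ℙ, ν.rnDeriv ℙ ω ≤ ENNReal.ofReal K)
    (φ : Ω → 𝒳) (hφ : MemLp φ 2 ℙ) :
    ‖(∫ ω, φ ω ∂μ) - ∫ ω, φ ω ∂ν‖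
      ≤ 2 * Real.sqrt (2 * K) * (eLpNorm φ 2 ℙ).toReal *
        Real.sqrt ((1/2) * ∫ ω, (Real.sqrt ((μ.rnDeriv ℙ ω).toReal)
          - Real.sqrt ((ν.rnDeriv ℙ ω).toReal))^2 ∂ℙ) := by
  refine (norm_integral_sub_integral_le_of_rnDeriv_le hμ hν hK.le hμK hνK hφ).trans_eq ?_
  set I := ∫ ω, (√(μ.rnDeriv ℙ ω).toReal - √(ν.rnDeriv ℙ ω).toReal) ^ 2 ∂ℙ
  have hI : √(2 * K) * √(1 / 2 * I) = √K * √I := by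
    rw [← Real.sqrt_mul (by positivity), ← Real.sqrt_mul hK.le]
    ring_nf
  linear_combination -2 * (eLpNorm φ 2 ℙ).toReal * hI

theorem stmt9 {Ω : Type*} [MeasurableSpace Ω] {𝒳 : Type*}
    [NormedAddCommGroup 𝒳] [NormedSpace ℝ 𝒳] [CompleteSpace 𝒳]
    (ℙ μ ν : Measure Ω) [IsProbabilityMeasure ℙ] [IsProbabilityMeasure μ]
    [IsProbabilityMeasure ν]
    (hμ : μ ≪ ℙ) (hν : ν ≪ ℙ)
    (K : ℝ) (hK : 0 < K)
    (hμK : ∀ᵐ ω ∂ℙ, μ.rnDeriv ℙ ω ≤ ENNReal.ofReal K)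
    (hνK : ∀ᵐ ω ∂ℙ, ν.rnDeriv ℙ ω ≤ ENNReal.ofReal K)
    (φ : Ω → 𝒳) (hφ : MemLp φ 2 ℙ) :
    ‖(∫ ω, φ ω ∂μ) - ∫ ω, φ ω ∂ν‖
      ≤ 2 * Real.sqrt (2 * K) * (eLpNorm φ 2 ℙ).toReal *
        Real.sqrt ((1/2) * ∫ ω, (Real.sqrt ((μ.rnDeriv ℙ ω).toReal)
          - Real.sqrt ((ν.rnDeriv ℙ ω).toReal))^2 ∂ℙ) :=
  stmt9_general ℙ μ ν hμ hν K hK hμK hνK φ hφ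
end

section
/- Let Σ be symmetric positive definite and Φ_i(ω) = −log ρ(δ − G_i(ω)) for the Gaussian density ρ with covariance Σ, where G_i = 𝒪 ∘ u_i for a bounded linear map 𝒪 : W → ℝ^k and u_i(ω) ∈ W (i = 1, 2), and ‖δ‖₂ ≤ λ. Then |Φ₁(ω) − Φ₂(ω)| ≤ C ‖u₁(ω) − u₂(ω)‖_W (1 + ‖u₁(ω)‖_W + ‖u₂(ω)‖_W), where C depends only on Σ, λ, and ‖𝒪‖. -/
open MeasureTheory Real RealInnerProductSpace

theorem stmt11 {Ω W : Type*} [NormedAddCommGroup W] [NormedSpace ℝ W]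
    (k : ℕ) (S : Matrix (Fin k) (Fin k) ℝ) (hS : S.PosDef)
    (𝒪 : W →L[ℝ] EuclideanSpace ℝ (Fin k)) (lam : ℝ) (hlam : 0 < lam) :
    ∃ C > (0:ℝ), ∀ δ : EuclideanSpace ℝ (Fin k), ‖δ‖ ≤ lam →
      ∀ (u₁ u₂ : Ω → W) (ω : Ω),
      |((k:ℝ)/2 * Real.log (2 * Real.pi * S.det)
          + (1/2) * ⟪(Matrix.toEuclideanCLM (𝕜 := ℝ) S⁻¹) (δ - 𝒪 (u₁ ω)), δ - 𝒪 (u₁ ω)⟫)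
        - ((k:ℝ)/2 * Real.log (2 * Real.pi * S.det)
          + (1/2) * ⟪(Matrix.toEuclideanCLM (𝕜 := ℝ) S⁻¹) (δ - 𝒪 (u₂ ω)), δ - 𝒪 (u₂ ω)⟫)|
        ≤ C * ‖u₁ ω - u₂ ω‖ * (1 + ‖u₁ ω‖ + ‖u₂ ω‖) := by
  set A := Matrix.toEuclideanCLM (𝕜 := ℝ) S⁻¹ with hA
  set M : ℝ := ‖A‖ * ‖𝒪‖ * (2 * lam + ‖𝒪‖)
  have hM : 0 ≤ M := by positivity
  refine ⟨M + 1, by positivity, fun δ hδ u₁ u₂ ω => ?_⟩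
  set x₁ := δ - 𝒪 (u₁ ω)
  set x₂ := δ - 𝒪 (u₂ ω)
  have hx₁ : ‖x₁‖ ≤ lam + ‖𝒪‖ * ‖u₁ ω‖ := by
    calc ‖x₁‖ ≤ ‖δ‖ + ‖𝒪 (u₁ ω)‖ := norm_sub_le _ _
    _ ≤ lam + ‖𝒪‖ * ‖u₁ ω‖ := add_le_add hδ (𝒪.le_opNorm _)
  have hx₂ : ‖x₂‖ ≤ lam + ‖𝒪‖ * ‖u₂ ω‖ := by
    calc ‖x₂‖ ≤ ‖δ‖ + ‖𝒪 (u₂ ω)‖ := norm_sub_le _ _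
    _ ≤ lam + ‖𝒪‖ * ‖u₂ ω‖ := add_le_add hδ (𝒪.le_opNorm _)
  have hd : ‖x₁ - x₂‖ ≤ ‖𝒪‖ * ‖u₁ ω - u₂ ω‖ := by
    have : x₁ - x₂ = 𝒪 (u₂ ω - u₁ ω) := by
      simp only [x₁, x₂, map_sub]; abel
    rw [this]
    calc ‖𝒪 (u₂ ω - u₁ ω)‖ ≤ ‖𝒪‖ * ‖u₂ ω - u₁ ω‖ := 𝒪.le_opNorm _
    _ = ‖𝒪‖ * ‖u₁ ω - u₂ ω‖ := by rw [norm_sub_rev]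
  have key : |⟪A x₁, x₁⟫ - ⟪A x₂, x₂⟫| ≤ ‖A‖ * ‖x₁ - x₂‖ * (‖x₁‖ + ‖x₂‖) := by
    have hid : ⟪A x₁, x₁⟫ - ⟪A x₂, x₂⟫ = ⟪A (x₁ - x₂), x₁⟫ + ⟪A x₂, x₁ - x₂⟫ := by
      simp only [map_sub, inner_sub_left, inner_sub_right]; ring
    rw [hid]
    calc |⟪A (x₁ - x₂), x₁⟫ + ⟪A x₂, x₁ - x₂⟫|
        ≤ |⟪A (x₁ - x₂), x₁⟫| + |⟪A x₂, x₁ - x₂⟫| := abs_add_le _ _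
    _ ≤ ‖A (x₁ - x₂)‖ * ‖x₁‖ + ‖A x₂‖ * ‖x₁ - x₂‖ :=
        add_le_add (abs_real_inner_le_norm _ _) (abs_real_inner_le_norm _ _)
    _ ≤ (‖A‖ * ‖x₁ - x₂‖) * ‖x₁‖ + (‖A‖ * ‖x₂‖) * ‖x₁ - x₂‖ :=
        add_le_add (mul_le_mul_of_nonneg_right (A.le_opNorm _) (norm_nonneg _))
          (mul_le_mul_of_nonneg_right (A.le_opNorm _) (norm_nonneg _))
    _ = ‖A‖ * ‖x₁ - x₂‖ * (‖x₁‖ + ‖x₂‖) := by ring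
  have hsum : ‖x₁‖ + ‖x₂‖ ≤ (2 * lam + ‖𝒪‖) * (1 + ‖u₁ ω‖ + ‖u₂ ω‖) := by
    have h1 : (0:ℝ) ≤ ‖u₁ ω‖ := norm_nonneg _
    have h2 : (0:ℝ) ≤ ‖u₂ ω‖ := norm_nonneg _
    have h3 : (0:ℝ) ≤ ‖𝒪‖ := norm_nonneg _
    nlinarith [hx₁, hx₂]
  have hAn : (0:ℝ) ≤ ‖A‖ := norm_nonneg _
  have hOn : (0:ℝ) ≤ ‖𝒪‖ := norm_nonneg _
  have hc : (0:ℝ) ≤ ‖u₁ ω - u₂ ω‖ := norm_nonneg _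
  have hpos : (0:ℝ) ≤ 1 + ‖u₁ ω‖ + ‖u₂ ω‖ := by positivity
  have : |⟪A x₁, x₁⟫ - ⟪A x₂, x₂⟫| ≤ M * ‖u₁ ω - u₂ ω‖ * (1 + ‖u₁ ω‖ + ‖u₂ ω‖) := by
    calc |⟪A x₁, x₁⟫ - ⟪A x₂, x₂⟫| ≤ ‖A‖ * ‖x₁ - x₂‖ * (‖x₁‖ + ‖x₂‖) := key
    _ ≤ ‖A‖ * (‖𝒪‖ * ‖u₁ ω - u₂ ω‖) * ((2 * lam + ‖𝒪‖) * (1 + ‖u₁ ω‖ + ‖u₂ ω‖)) := by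
        gcongr
    _ = M * ‖u₁ ω - u₂ ω‖ * (1 + ‖u₁ ω‖ + ‖u₂ ω‖) := by simp only [M]; ring
  have habs : |(1:ℝ)/2 * ⟪A x₁, x₁⟫ - 1/2 * ⟪A x₂, x₂⟫|
      = 1/2 * |⟪A x₁, x₁⟫ - ⟪A x₂, x₂⟫| := by
    rw [← mul_sub, abs_mul, abs_of_nonneg (by norm_num : (0:ℝ) ≤ 1/2)]
  calc |((k:ℝ)/2 * Real.log (2 * Real.pi * S.det) + (1/2) * ⟪A x₁, x₁⟫)
        - ((k:ℝ)/2 * Real.log (2 * Real.pi * S.det) + (1/2) * ⟪A x₂, x₂⟫)|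
      = |(1:ℝ)/2 * ⟪A x₁, x₁⟫ - 1/2 * ⟪A x₂, x₂⟫| := by ring_nf
    _ = 1/2 * |⟪A x₁, x₁⟫ - ⟪A x₂, x₂⟫| := habs
    _ ≤ 1 * |⟪A x₁, x₁⟫ - ⟪A x₂, x₂⟫| := by
        have := abs_nonneg (⟪A x₁, x₁⟫ - ⟪A x₂, x₂⟫); linarith
    _ ≤ M * ‖u₁ ω - u₂ ω‖ * (1 + ‖u₁ ω‖ + ‖u₂ ω‖) := by rw [one_mul]; exact this
    _ ≤ (M + 1) * ‖u₁ ω - u₂ ω‖ * (1 + ‖u₁ ω‖ + ‖u₂ ω‖) := by nlinarith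
end
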